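/- arXiv:1911.00250 — 2 statements merged into one kernel-verified Lean document; each statement's English description precedes it below -/
import Mathlib

section
/- Let k be a field, V a finite-dimensional k-vector space, and θ ∈ End_k(V). Let W ⊆ V be a subspace such that the right ideal I_W = { f ∈ End_k(V) : range(f) ⊆ W } satisfies (ad θ)(I_W) ⊆ I_W, where ad θ : f ↦ θ∘f − f∘θ. Then W is θ-invariant: θ(W) ⊆ W. -/
/-- For a subspace `W ⊆ V`, the set `I_W = {f ∈ End_k(V) : range f ⊆ W}`,
as an additive subgroup of the endomorphism algebra. -/
def rangeIdeal {k V : Type*} [Field k] [AddCommGroup V] [Module k V]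
    (W : Submodule k V) : AddSubgroup (Module.End k V) where
  carrier := {f | LinearMap.range f ≤ W}
  add_mem' := by
    intro f g hf hg
    rintro x ⟨y, rfl⟩
    rw [LinearMap.add_apply]
    exact W.add_mem (hf (LinearMap.mem_range_self f y)) (hg (LinearMap.mem_range_self g y))
  zero_mem' := by
    rintro x ⟨y, rfl⟩
    simp
  neg_mem' := by
    intro f hf
    rintro x ⟨y, rfl⟩
    rw [LinearMap.neg_apply]
    exact W.neg_mem (hf (LinearMap.mem_range_self f y))

/-- A right ideal of `End_k(V)`: an additive subgroup closed under right
multiplication (composition on the right) by arbitrary endomorphisms. -/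
def IsRightIdeal {k V : Type*} [Field k] [AddCommGroup V] [Module k V]
    (I : AddSubgroup (Module.End k V)) : Prop :=
  ∀ f ∈ I, ∀ g : Module.End k V, f * g ∈ I

/-- If the right ideal `I_W = {f ∈ End_k(V) : range f ⊆ W}` is invariant under
the adjoint map `ad θ : f ↦ θ∘f − f∘θ`, then the subspace `W` is `θ`-invariant. -/
theorem invariant_of_rangeIdeal_adInvariant
    {k V : Type*} [Field k] [AddCommGroup V] [Module k V] [FiniteDimensional k V]
    (θ : Module.End k V) (W : Submodule k V)
    (hI : ∀ f ∈ rangeIdeal W, θ * f - f * θ ∈ rangeIdeal W) :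
    ∀ x ∈ W, θ x ∈ W := by
  intro x hx
  by_cases hx0 : x = 0
  · simp [hx0]
  · obtain ⟨φ, hφ⟩ : ∃ φ : Module.Dual k V, φ x ≠ 0 := by
      by_contra h
      push_neg at h
      exact hx0 ((Module.forall_dual_apply_eq_zero_iff k x).mp h)
    set c : Module.Dual k V := (φ x)⁻¹ • φ with hc
    have hcx : c x = 1 := by simp [hc, inv_mul_cancel₀ hφ]
    set f : Module.End k V := (LinearMap.toSpanSingleton k V x).comp c with hf
    have hfmem : f ∈ rangeIdeal W := by
      rintro y ⟨v, rfl⟩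
      exact W.smul_mem _ hx
    have := hI f hfmem
    have h2 : (θ * f - f * θ) x ∈ W := this ⟨x, rfl⟩
    have h3 : (θ * f - f * θ) x = θ x - c (θ x) • x := by
      simp [hf, LinearMap.toSpanSingleton, hcx]
    rw [h3] at h2
    have := W.add_mem h2 (W.smul_mem (c (θ x)) hx)
    simpa using this
end

section
/- Let k be a field, V a finite-dimensional k-vector space, and θ ∈ End_k(V). The assignment W ↦ I_W = { f ∈ End_k(V) : range(f) ⊆ W } is an inclusion-preserving bijection from the set of θ-invariant subspaces W ⊆ V (θ(W) ⊆ W) onto the set of right ideals I of End_k(V) that are invariant under ad θ : f ↦ θ∘f − f∘θ, i.e. satisfy (ad θ)(I) ⊆ I. Moreover it sends W = 0 to I = 0 and W = V to I = End_k(V), and proper nonzero invariant subspaces to proper nonzero invariant right ideals. -/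
lemma mem_rangeIdeal {k V : Type*} [Field k] [AddCommGroup V] [Module k V]
    {W : Submodule k V} {f : Module.End k V} :
    f ∈ rangeIdeal W ↔ LinearMap.range f ≤ W := Iff.rfl

/-- Factoring lemma over a field: if `range g ≤ range f` then `g = f ∘ u`. -/
lemma factor_through {k A B C : Type*} [Field k] [AddCommGroup A] [Module k A]
    [AddCommGroup B] [Module k B] [AddCommGroup C] [Module k C]
    (f : A →ₗ[k] C) (g : B →ₗ[k] C) (h : LinearMap.range g ≤ LinearMap.range f) :
    ∃ u : B →ₗ[k] A, f ∘ₗ u = g := by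
  obtain ⟨s, hs⟩ := f.rangeRestrict.exists_rightInverse_of_surjective f.range_rangeRestrict
  refine ⟨s ∘ₗ g.codRestrict (LinearMap.range f) (fun b => h ⟨b, rfl⟩), ?_⟩
  ext b
  have h1 : f.rangeRestrict (s (g.codRestrict (LinearMap.range f) (fun b => h ⟨b, rfl⟩) b))
      = g.codRestrict (LinearMap.range f) (fun b => h ⟨b, rfl⟩) b :=
    LinearMap.ext_iff.1 hs _
  have := congrArg (Subtype.val) h1
  simpa using this


/-- The assignment `W ↦ I_W = {f : range f ⊆ W}` is an inclusion-preserving bijection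
from the `θ`-invariant subspaces of `V` onto the `ad θ`-invariant right ideals of
`End_k(V)`; it sends `0 ↦ 0`, `V ↦ End_k(V)`, and proper nonzero invariant subspaces
to proper nonzero invariant right ideals. -/
theorem rangeIdeal_bijection_invariant_subspaces_adInvariant_rightIdeals
    {k V : Type*} [Field k] [AddCommGroup V] [Module k V] [FiniteDimensional k V]
    (θ : Module.End k V) :
    -- inclusion-preserving (hence injective on invariant subspaces)
    (∀ W W' : Submodule k V, (∀ x ∈ W, θ x ∈ W) → (∀ x ∈ W', θ x ∈ W') →
      (W ≤ W' ↔ rangeIdeal W ≤ rangeIdeal W')) ∧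
    -- lands in the set of `ad θ`-invariant right ideals
    (∀ W : Submodule k V, (∀ x ∈ W, θ x ∈ W) →
      IsRightIdeal (rangeIdeal W) ∧ ∀ f ∈ rangeIdeal W, θ * f - f * θ ∈ rangeIdeal W) ∧
    -- surjective onto it, with a unique invariant preimage (bijectivity)
    (∀ I : AddSubgroup (Module.End k V), IsRightIdeal I →
      (∀ f ∈ I, θ * f - f * θ ∈ I) →
      ∃! W : Submodule k V, (∀ x ∈ W, θ x ∈ W) ∧ rangeIdeal W = I) ∧
    -- sends `0` to `0` and `V` to `End_k(V)`
    rangeIdeal (⊥ : Submodule k V) = ⊥ ∧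
    rangeIdeal (⊤ : Submodule k V) = ⊤ ∧
    -- proper nonzero invariant subspaces go to proper nonzero invariant right ideals
    (∀ W : Submodule k V, (∀ x ∈ W, θ x ∈ W) → W ≠ ⊥ → W ≠ ⊤ →
      rangeIdeal W ≠ ⊥ ∧ rangeIdeal W ≠ ⊤) := by
  classical
  -- rank-one maps
  have rankone : ∀ (W : Submodule k V) (w : V), w ∈ W → w ≠ 0 →
      ∃ f : Module.End k V, f ∈ rangeIdeal W ∧ f w = w ∧ f ≠ 0 := by
    intro W w hw hw0
    obtain ⟨φ, hφ⟩ : ∃ φ : Module.Dual k V, φ w ≠ 0 := by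
      by_contra h
      push_neg at h
      exact hw0 ((Module.forall_dual_apply_eq_zero_iff k w).1 h)
    refine ⟨(LinearMap.toSpanSingleton k V ((φ w)⁻¹ • w)) ∘ₗ φ, ?_, ?_, ?_⟩
    · rintro x ⟨y, rfl⟩
      simp only [LinearMap.comp_apply, LinearMap.toSpanSingleton_apply]
      exact W.smul_mem _ (W.smul_mem _ hw)
    · simp only [LinearMap.comp_apply, LinearMap.toSpanSingleton_apply, smul_smul]
      rw [mul_inv_cancel₀ hφ, one_smul]
    · intro h0
      have : ((LinearMap.toSpanSingleton k V ((φ w)⁻¹ • w)) ∘ₗ φ) w = 0 := by rw [h0]; rfl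
      rw [LinearMap.comp_apply, LinearMap.toSpanSingleton_apply, smul_smul,
        mul_inv_cancel₀ hφ, one_smul] at this
      exact hw0 this
  have part1 : ∀ W W' : Submodule k V,
      (W ≤ W' ↔ rangeIdeal W ≤ rangeIdeal W') := by
    intro W W'
    constructor
    · intro h f hf
      exact le_trans hf h
    · intro h w hw
      by_cases hw0 : w = 0
      · rw [hw0]
        exact W'.zero_mem
      obtain ⟨f, hf, hfw, -⟩ := rankone W w hw hw0
      exact (h hf) ⟨w, hfw⟩
  have part2 : ∀ W : Submodule k V, (∀ x ∈ W, θ x ∈ W) →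
      IsRightIdeal (rangeIdeal W) ∧ ∀ f ∈ rangeIdeal W, θ * f - f * θ ∈ rangeIdeal W := by
    intro W hW
    constructor
    · intro f hf g
      exact le_trans (LinearMap.range_comp_le_range g f) hf
    · intro f hf
      refine AddSubgroup.sub_mem _ ?_ ?_
      · rintro x ⟨y, rfl⟩
        exact hW _ (hf ⟨y, rfl⟩)
      · exact le_trans (LinearMap.range_comp_le_range θ f) hf
  refine ⟨fun W W' _ _ => part1 W W', part2, ?_, ?_, ?_, ?_⟩
  · -- surjectivity with unique preimage
    intro I hI hIθ
    -- I as a k-submodule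
    have hsmul : ∀ (c : k) (f : Module.End k V), f ∈ I → c • f ∈ I := by
      intro c f hf
      have := hI f hf (c • 1)
      simp only [mul_smul_comm, mul_one] at this
      exact this
    set J : Submodule k (Module.End k V) :=
      { carrier := I
        add_mem' := fun ha hb => I.add_mem ha hb
        zero_mem' := I.zero_mem
        smul_mem' := fun c f hf => hsmul c f hf } with hJ
    obtain ⟨S, hS⟩ := IsNoetherian.noetherian J
    have hSI : ∀ f ∈ S, f ∈ I := by
      intro f hf
      have : f ∈ J := hS ▸ Submodule.subset_span hf
      exact this
    set W : Submodule k V := S.sup (fun f => LinearMap.range f) with hWdef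
    -- every element of I has range inside W
    have claimA' : ∀ f ∈ Submodule.span k (S : Set (Module.End k V)),
        LinearMap.range f ≤ W := by
      intro f hf
      induction hf using Submodule.span_induction with
      | mem g hg => exact Finset.le_sup hg
      | zero => simp
      | add g h _ _ hg hh =>
          rintro x ⟨y, rfl⟩
          exact W.add_mem (hg ⟨y, rfl⟩) (hh ⟨y, rfl⟩)
      | smul c g _ hg =>
          rintro x ⟨y, rfl⟩
          exact W.smul_mem c (hg ⟨y, rfl⟩)
    have claimA : ∀ f ∈ I, LinearMap.range f ≤ W := by
      intro f hf
      exact claimA' f (by rw [hS]; exact hf)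
    -- W is θ-invariant
    have hWinv : ∀ x ∈ W, θ x ∈ W := by
      have hmap : W ≤ Submodule.comap θ W := by
        rw [hWdef]
        apply Finset.sup_le
        intro f hf
        have hθf : θ * f ∈ I := by
          have h1 := hIθ f (hSI f hf)
          have h2 := hI f (hSI f hf) θ
          have := I.add_mem h1 h2
          simpa using this
        refine Submodule.map_le_iff_le_comap.mp ?_
        rw [← LinearMap.range_comp]
        exact claimA _ hθf
      intro x hx
      exact hmap hx
    have hRI : rangeIdeal W = I := by
      apply le_antisymm
      · -- hard direction: range g ≤ W → g ∈ I
        intro g hg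
        set F : (↥S → V) →ₗ[k] V :=
          ∑ f : ↥S, (f : Module.End k V) ∘ₗ
            (LinearMap.proj (R := k) (φ := fun _ : ↥S => V) f) with hF
        have hrange : LinearMap.range g ≤ LinearMap.range F := by
          refine le_trans hg ?_
          rw [hWdef]
          apply Finset.sup_le
          intro f hf
          rintro x ⟨y, rfl⟩
          refine ⟨Pi.single (⟨f, hf⟩ : ↥S) y, ?_⟩
          rw [hF, LinearMap.sum_apply]
          rw [Finset.sum_eq_single (⟨f, hf⟩ : ↥S)]
          · simp
          · intro b _ hb
            simp [LinearMap.proj, Pi.single_eq_of_ne hb]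
          · simp
        obtain ⟨u, hu⟩ := factor_through F g hrange
        have hFu : F ∘ₗ u ∈ I := by
          have hsumc : F ∘ₗ u = ∑ f : ↥S,
              ((f : Module.End k V) * ((LinearMap.proj (R := k)
                (φ := fun _ : ↥S => V) f) ∘ₗ u)) := by
            ext x
            simp [hF, LinearMap.sum_apply, Module.End.mul_apply]
          rw [hsumc]
          exact AddSubgroup.sum_mem I fun f _ => hI _ (hSI _ f.2) _
        rw [← hu]
        exact hFu
      · intro f hf
        exact claimA f hf
    refine ⟨W, ⟨hWinv, hRI⟩, ?_⟩
    rintro W' ⟨-, hW'⟩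
    have h := hW'.trans hRI.symm
    exact le_antisymm ((part1 W' W).2 h.le) ((part1 W W').2 h.ge)
  · ext f
    simp [mem_rangeIdeal, AddSubgroup.mem_bot, le_bot_iff, LinearMap.range_eq_bot]
  · ext f
    simp [mem_rangeIdeal, le_top]
  · intro W hW hbot htop
    constructor
    · obtain ⟨w, hw, hw0⟩ := Submodule.exists_mem_ne_zero_of_ne_bot hbot
      obtain ⟨f, hf, -, hf0⟩ := rankone W w hw hw0
      intro h
      rw [h] at hf
      exact hf0 hf
    · intro h
      have h1 : (1 : Module.End k V) ∈ rangeIdeal W := by rw [h]; trivial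
      apply htop
      rw [eq_top_iff]
      intro x _
      exact h1 ⟨x, rfl⟩
end
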